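/- In the formal power series ring ℤ[[t, z_1, …, z_r]], writing z^α = z_1^{m_1}⋯z_r^{m_r} for α = m_1α_1 + ⋯ + m_rα_r in the positive root lattice of B_r, one has ∏_{α ∈ Φ⁺(B_r)} (1 − t·z^{α})·(1 − z^{α})^{-1} = Σ_{T ∈ 𝒯(∞)} (1 − t)^{seg(T)} · z^{−wt(T)}, where Φ⁺(B_r) = {β_{i,k} : 1 ≤ i ≤ k ≤ r} ∪ {γ_{i,k} : 1 ≤ i < k ≤ r} and the right-hand side is a well-defined formal power series because for each monomial only finitely many T ∈ 𝒯(∞) contribute. -/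

import Mathlib

/-!
Each factor expands as `(1 - t z^α)(1 - z^α)⁻¹ = 1 + (1 - t) ∑_{n ≥ 1} z^{nα}`, so the coefficients of
the product are those of `∑_c (1 - t)^{#supp c} z^{∑ c(α) α}` over all Kostant partitions
`c : Φ⁺ → ℕ`; since every `z^α` has positive degree, only finitely many `c` reach a given monomial.

The map `T ↦ Ξ(T)` is a bijection from `𝒯(∞)` onto Kostant partitions. A marginally large tableau
is determined by the multiplicities `ℓ_{i,x}` with `x ≻ i`: each row is sorted and the length of its
leading block of `i`'s is forced by marginal largeness. The only pair of segments that share a root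
is the `0`- and `ī`-segment of row `i`, and as `ℓ_{i,0} ≤ 1` both are recovered from
`Ξ(T)(β_{i,r}) = 2ℓ_{i,ī} + ℓ_{i,0}`. This sharing is exactly what `e_B` corrects, so that `seg(T)` is
the size of the support of `Ξ(T)`, while `-wt(T) = ∑_α Ξ(T)(α) α` by definition.
-/

open MvPowerSeries

noncomputable def tvar (r : ℕ) : MvPowerSeries (Option (Fin r)) ℤ :=
  MvPowerSeries.X none

noncomputable def zmon (r : ℕ) (v : Fin r → ℕ) : MvPowerSeries (Option (Fin r)) ℤ :=
  MvPowerSeries.monomial (R := ℤ) (Finsupp.equivFunOnFinite.symm fun o => Option.elim o 0 v) 1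

structure TabB (r : ℕ) where
  row : Fin r → List ℕ
  entry_mem : ∀ i : Fin r, ∀ e ∈ row i, 1 ≤ e ∧ e ≤ 2 * r + 1
  row_weak : ∀ i : Fin r, (row i).Chain' (· ≤ ·)
  first_col : ∀ i : Fin r, (row i).head? = some (i.1 + 1)
  row_bound : ∀ i : Fin r, ∀ e ∈ row i, e ≤ 2 * r + 1 - i.1
  zero_once : ∀ i : Fin r, (row i).count (r + 1) ≤ 1
  col_le : ∀ i : Fin r, ∀ h : i.1 + 1 < r,
    (row ⟨i.1 + 1, h⟩).length ≤ (row i).length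
  col_strict : ∀ i : Fin r, ∀ h : i.1 + 1 < r, ∀ j < (row ⟨i.1 + 1, h⟩).length,
    (row i).getD j 0 < (row ⟨i.1 + 1, h⟩).getD j 0
  marg_large : ∀ i : Fin r, (row i).count (i.1 + 1) =
    (if h : i.1 + 1 < r then (row ⟨i.1 + 1, h⟩).length else 0) + 1

def ellB (r : ℕ) (T : TabB r) (i : Fin r) (x : ℕ) : ℕ := (T.row i).count x

def segB' (r : ℕ) (T : TabB r) : ℕ :=
  ∑ i : Fin r, ((Finset.Icc (i.1 + 2) (2 * r + 1)).filter fun x => ellB r T i x ≠ 0).card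

def eB (r : ℕ) (T : TabB r) : ℕ :=
  (Finset.univ.filter fun i : Fin r =>
    ellB r T i (r + 1) ≠ 0 ∧ ellB r T i (2 * r + 1 - i.1) ≠ 0).card

def segB (r : ℕ) (T : TabB r) : ℕ := segB' r T - eB r T

def betaB (r : ℕ) (i k : ℕ) : Fin r → ℕ :=
  fun j => if i ≤ j.1 + 1 ∧ j.1 + 1 ≤ k then 1 else 0

def gammaB (r : ℕ) (i k : ℕ) : Fin r → ℕ :=
  fun j => if i ≤ j.1 + 1 ∧ j.1 + 1 ≤ k - 1 then 1 else if k ≤ j.1 + 1 then 2 else 0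

def posRootsB (r : ℕ) : Finset (Fin r → ℕ) :=
  ((Finset.Icc 1 r ×ˢ Finset.Icc 1 r).filter fun p => p.1 ≤ p.2).image
      (fun p => betaB r p.1 p.2) ∪
    ((Finset.Icc 1 r ×ˢ Finset.Icc 1 r).filter fun p => p.1 < p.2).image
      (fun p => gammaB r p.1 p.2)

def XiB (r : ℕ) (T : TabB r) (v : Fin r → ℕ) : ℕ :=
  ∑ i : Fin r,
    ((∑ k ∈ Finset.Icc (i.1 + 2) r,
        if v = betaB r (i.1 + 1) (k - 1) then ellB r T i k else 0) +
      (if v = betaB r (i.1 + 1) r then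
        2 * ellB r T i (2 * r + 1 - i.1) + ellB r T i (r + 1) else 0) +
      (∑ k ∈ Finset.Icc (i.1 + 2) r,
        if v = gammaB r (i.1 + 1) k then ellB r T i (2 * r + 2 - k) else 0))

def negwtB (r : ℕ) (T : TabB r) : Fin r → ℕ :=
  ∑ v ∈ posRootsB r, XiB r T v • v

open Finset

lemma one_sub_mul_mul_eq_sum_add {R : Type*} [CommRing R] {x g : R} (s : R)
    (hg : (1 - x) * g = 1) (N : ℕ) :
    (1 - s * x) * g =
      ∑ n ∈ range (N + 1), (if n = 0 then 1 else 1 - s) * x ^ n + (1 - s) * x ^ (N + 1) * g := by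
  have hsum : ∑ n ∈ range (N + 1), (if n = 0 then 1 else 1 - s) * x ^ n =
      s + (1 - s) * ∑ n ∈ range (N + 1), x ^ n := by
    rw [sum_range_succ', sum_range_succ' (fun n => x ^ n), mul_add, mul_sum]
    simp only [Nat.add_one_ne_zero, if_false, if_true, pow_zero]
    ring
  rw [hsum]
  linear_combination (s + (1 - s) * ∑ n ∈ range (N + 1), x ^ n) * hg -
    (1 - s) * g * mul_neg_geom_sum x (N + 1)

namespace MvPowerSeries

variable {σ R : Type*} [CommRing R]

lemma lt_order_prod_add_sub_prod {ι : Type*} (s : Finset ι) (a b : ι → MvPowerSeries σ R) {n : ℕ}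
    (hb : ∀ i ∈ s, n < (b i).order) :
    n < (∏ i ∈ s, (a i + b i) - ∏ i ∈ s, a i).order := by
  classical
  induction s using Finset.induction_on with
  | empty => simp
  | insert j s hj ih =>
    rw [prod_insert hj, prod_insert hj, show ∀ p q : MvPowerSeries σ R,
      (a j + b j) * p - a j * q = a j * (p - q) + b j * p by intros; ring]
    refine (lt_min ?_ ?_).trans_le min_order_le_add
    · exact (ih fun i hi => hb i (mem_insert_of_mem hi)).trans_le (le_add_self.trans le_order_mul)
    · exact (hb j (mem_insert_self j s)).trans_le (le_self_add.trans le_order_mul)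

lemma coeff_prod_add_of_lt_order {ι : Type*} (s : Finset ι) (a b : ι → MvPowerSeries σ R)
    (d : σ →₀ ℕ) (hb : ∀ i ∈ s, (d.degree : ℕ∞) < (b i).order) :
    coeff d (∏ i ∈ s, (a i + b i)) = coeff d (∏ i ∈ s, a i) :=
  sub_eq_zero.mp <| by rw [← map_sub]; exact coeff_of_lt_order (lt_order_prod_add_sub_prod s a b hb)

lemma order_le_order_prod {ι : Type*} [DecidableEq ι] {s : Finset ι} (f : ι → MvPowerSeries σ R) {i : ι}
    (hi : i ∈ s) : (f i).order ≤ (∏ j ∈ s, f j).order := by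
  rw [← mul_prod_erase s f hi]
  exact le_self_add.trans le_order_mul

theorem coeff_prod_one_sub_mul_invOfUnit [TopologicalSpace R] {ι : Type*} [Fintype ι]
    [DecidableEq ι] (s : MvPowerSeries σ R) (x : ι → MvPowerSeries σ R)
    (hx : ∀ i, constantCoeff (x i) = 0) (d : σ →₀ ℕ) :
    coeff d (∏ i, (1 - s * x i) * invOfUnit (1 - x i) 1) =
      ∑' c : ι → ℕ, coeff d ((1 - s) ^ #{i | c i ≠ 0} * ∏ i, x i ^ c i) := by
  set N := d.degree
  have hx_pow (i : ι) (n : ℕ) : (n : ℕ∞) ≤ (x i ^ n).order :=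
    le_order_pow_of_constantCoeff_eq_zero n (hx i)
  have hfactor (i : ι) := one_sub_mul_mul_eq_sum_add s
    (mul_invOfUnit (1 - x i) 1 (by simp [hx i])) N
  have htail (i : ι) : (N : ℕ∞) < ((1 - s) * x i ^ (N + 1) * invOfUnit (1 - x i) 1).order :=
    calc (N : ℕ∞) < (N + 1 : ℕ) := by exact_mod_cast N.lt_succ_self
      _ ≤ (x i ^ (N + 1)).order := hx_pow i (N + 1)
      _ ≤ _ := by
        rw [mul_comm (1 - s), mul_assoc]
        exact le_self_add.trans le_order_mul
  have hterm (c : ι → ℕ) : (1 - s) ^ #{i | c i ≠ 0} * ∏ i, x i ^ c i =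
      ∏ i, (if c i = 0 then 1 else 1 - s) * x i ^ c i := by
    rw [prod_mul_distrib, prod_ite, prod_const_one, one_mul, prod_const]
  have hvanish (c : ι → ℕ) (hc : c ∉ Fintype.piFinset fun _ => range (N + 1)) :
      coeff d ((1 - s) ^ #{i | c i ≠ 0} * ∏ i, x i ^ c i) = 0 := by
    obtain ⟨i, hi⟩ : ∃ i, N < c i := by simpa [Fintype.mem_piFinset] using hc
    apply coeff_of_lt_order
    calc (N : ℕ∞) < c i := by exact_mod_cast hi
      _ ≤ (x i ^ c i).order := hx_pow i (c i)
      _ ≤ (∏ j, x j ^ c j).order := order_le_order_prod (fun j => x j ^ c j) (mem_univ i)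
      _ ≤ _ := le_add_self.trans le_order_mul
  rw [prod_congr rfl fun i _ => hfactor i, coeff_prod_add_of_lt_order _ _ _ d fun i _ => htail i,
    prod_univ_sum, map_sum, tsum_eq_sum hvanish]
  exact sum_congr rfl fun c _ => by rw [hterm]

end MvPowerSeries

section Monomials

variable {r : ℕ}

lemma zmon_zero : zmon r 0 = 1 := by
  rw [zmon, ← monomial_zero_one]
  congr
  ext o
  cases o <;> rfl

lemma zmon_add (u v : Fin r → ℕ) : zmon r (u + v) = zmon r u * zmon r v := by
  rw [zmon, zmon, zmon, monomial_mul_monomial, one_mul]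
  congr
  ext o
  cases o <;> rfl

lemma zmon_sum_nsmul {ι : Type*} (s : Finset ι) (c : ι → ℕ) (v : ι → Fin r → ℕ) :
    zmon r (∑ i ∈ s, c i • v i) = ∏ i ∈ s, zmon r (v i) ^ c i := by
  have hpow (n : ℕ) (u : Fin r → ℕ) : zmon r (n • u) = zmon r u ^ n := by
    induction n with
    | zero => rw [zero_smul, zmon_zero, pow_zero]
    | succ n ih => rw [succ_nsmul, zmon_add, ih, pow_succ]
  classical
  induction s using Finset.induction_on with
  | empty => rw [sum_empty, prod_empty, zmon_zero]
  | insert i s hi ih => rw [sum_insert hi, prod_insert hi, zmon_add, hpow, ih]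

lemma constantCoeff_zmon {v : Fin r → ℕ} (hv : v ≠ 0) : constantCoeff (zmon r v) = 0 := by
  obtain ⟨j, hj⟩ := Function.ne_iff.mp hv
  rw [zmon, ← coeff_zero_eq_constantCoeff_apply, coeff_monomial, if_neg]
  intro h
  exact hj (by simpa using (DFunLike.congr_fun h (some j)).symm)

end Monomials

section Roots

variable {r : ℕ}

lemma betaB_inj {a b a' b' : ℕ} (ha : 1 ≤ a) (hab : a ≤ b) (hb : b ≤ r)
    (ha' : 1 ≤ a') (hab' : a' ≤ b') (hb' : b' ≤ r) (h : betaB r a b = betaB r a' b') :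
    a = a' ∧ b = b' := by
  have key {c d c' d' : ℕ} (hc : 1 ≤ c) (hcd : c ≤ d) (hd : d ≤ r)
      (h : betaB r c d = betaB r c' d') : c' ≤ c ∧ d ≤ d' := by
    have h₁ := congrFun h ⟨c - 1, by omega⟩
    have h₂ := congrFun h ⟨d - 1, by omega⟩
    simp only [betaB] at h₁ h₂
    constructor
    · split_ifs at h₁ <;> omega
    · split_ifs at h₂ <;> omega
  have := key ha hab hb h
  have := key ha' hab' hb' h.symm
  omega

lemma gammaB_inj {a b a' b' : ℕ} (ha : 1 ≤ a) (hab : a < b) (hb : b ≤ r)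
    (ha' : 1 ≤ a') (hab' : a' < b') (hb' : b' ≤ r) (h : gammaB r a b = gammaB r a' b') :
    a = a' ∧ b = b' := by
  have key {c d c' d' : ℕ} (hc : 1 ≤ c) (hcd : c < d) (hd : d ≤ r)
      (h : gammaB r c d = gammaB r c' d') : c' ≤ c ∧ d' ≤ d := by
    have h₁ := congrFun h ⟨c - 1, by omega⟩
    have h₂ := congrFun h ⟨d - 1, by omega⟩
    simp only [gammaB] at h₁ h₂
    constructor
    · split_ifs at h₁ <;> omega
    · split_ifs at h₂ <;> omega
  have := key ha hab hb h
  have := key ha' hab' hb' h.symm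
  omega

lemma betaB_ne_gammaB {a b a' b' : ℕ} (ha' : 1 ≤ a') (hab' : a' < b') (hb' : b' ≤ r) :
    betaB r a b ≠ gammaB r a' b' := by
  intro h
  have h₁ := congrFun h ⟨r - 1, by omega⟩
  simp only [betaB, gammaB] at h₁
  split_ifs at h₁ <;> omega

def segCodes (r i : ℕ) : Finset ℕ := (Icc (i + 2) (2 * r + 1 - i)).erase (r + 1)

/-- The positive roots of `B_r` are indexed by the pairs `(i, x)` of a row `i` and the code `x` of
an entry that can form a segment of row `i` beyond its leading block. The code `r+1` of `0` is left
out: the `0`-segment of row `i` shares the root `β_{i+1,r}` with the `ī`-segment, of code `2r+1-i`. -/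
def segments (r : ℕ) : Finset (Fin r × ℕ) :=
  (univ ×ˢ range (2 * r + 2)).filter fun p => p.2 ∈ segCodes r p.1

def segmentRoot (r : ℕ) (p : Fin r × ℕ) : Fin r → ℕ :=
  if p.2 ≤ r then betaB r (p.1 + 1) (p.2 - 1)
  else if p.2 = 2 * r + 1 - p.1 then betaB r (p.1 + 1) r
  else gammaB r (p.1 + 1) (2 * r + 2 - p.2)

lemma mem_segCodes {i x : ℕ} :
    x ∈ segCodes r i ↔ i + 2 ≤ x ∧ x ≤ 2 * r + 1 - i ∧ x ≠ r + 1 := by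
  simp only [segCodes, mem_erase, mem_Icc]
  tauto

lemma mem_segments {p : Fin r × ℕ} :
    p ∈ segments r ↔ p.1 + 2 ≤ p.2 ∧ p.2 ≤ 2 * r + 1 - p.1 ∧ p.2 ≠ r + 1 := by
  simp only [segments, mem_filter, mem_product, mem_univ, mem_range, true_and, mem_segCodes]
  have := p.1.2
  omega

lemma sum_segments {M : Type*} [AddCommMonoid M] (f : Fin r × ℕ → M) :
    ∑ p ∈ segments r, f p = ∑ i : Fin r, ∑ x ∈ segCodes r i, f (i, x) :=
  sum_finset_product _ _ _ fun p => by simp [mem_segments, mem_segCodes]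

lemma sum_segCodes {M : Type*} [AddCommMonoid M] {i : ℕ} (hi : i < r) (f : ℕ → M) :
    ∑ x ∈ segCodes r i, f x =
      ∑ x ∈ Icc (i + 2) r, f x + f (2 * r + 1 - i) + ∑ k ∈ Icc (i + 2) r, f (2 * r + 2 - k) := by
  have hsplit : segCodes r i = Icc (i + 2) r ∪ insert (2 * r + 1 - i) (Icc (r + 2) (2 * r - i)) := by
    ext x
    simp only [mem_segCodes, mem_union, mem_insert, mem_Icc]
    omega
  have hdisj : Disjoint (Icc (i + 2) r) (insert (2 * r + 1 - i) (Icc (r + 2) (2 * r - i))) := by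
    simp only [disjoint_left, mem_insert, mem_Icc]
    omega
  have hnotmem : 2 * r + 1 - i ∉ Icc (r + 2) (2 * r - i) := by simp only [mem_Icc]; omega
  have hreflect : ∑ x ∈ Icc (r + 2) (2 * r - i), f x = ∑ k ∈ Icc (i + 2) r, f (2 * r + 2 - k) :=
    sum_nbij' (2 * r + 2 - ·) (2 * r + 2 - ·) (by simp only [mem_Icc]; omega)
      (by simp only [mem_Icc]; omega) (by simp only [mem_Icc]; omega)
      (by simp only [mem_Icc]; omega) fun x hx => by
        simp only [mem_Icc] at hx
        rw [show 2 * r + 2 - (2 * r + 2 - x) = x by omega]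
  rw [hsplit, sum_union hdisj, sum_insert hnotmem, hreflect, add_assoc]

lemma segmentRoot_of_le {i : Fin r} {x : ℕ} (hx : x ≤ r) :
    segmentRoot r (i, x) = betaB r (i + 1) (x - 1) := if_pos hx

lemma segmentRoot_bar (i : Fin r) :
    segmentRoot r (i, 2 * r + 1 - i) = betaB r (i + 1) r := by
  rw [segmentRoot, if_neg (by omega), if_pos rfl]

lemma segmentRoot_of_lt {i : Fin r} {x : ℕ} (hx : r < x) (hx' : x ≠ 2 * r + 1 - i) :
    segmentRoot r (i, x) = gammaB r (i + 1) (2 * r + 2 - x) := by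
  rw [segmentRoot, if_neg (by omega), if_neg hx']

lemma segmentRoot_apply_self {p : Fin r × ℕ} (hp : p ∈ segments r) : segmentRoot r p p.1 = 1 := by
  rw [mem_segments] at hp
  have := p.1.2
  unfold segmentRoot
  split_ifs <;> simp only [betaB, gammaB] <;> split_ifs <;> omega

lemma segmentRoot_ne_zero {p : Fin r × ℕ} (hp : p ∈ segments r) : segmentRoot r p ≠ 0 :=
  fun h => by simpa [h] using segmentRoot_apply_self hp

lemma segmentRoot_injOn : Set.InjOn (segmentRoot r) (segments r) := by
  rintro ⟨i, x⟩ hp ⟨i', x'⟩ hq h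
  rw [mem_coe, mem_segments] at hp hq
  dsimp only at hp hq
  suffices i.1 = i'.1 ∧ x = x' from Prod.ext (Fin.ext this.1) this.2
  unfold segmentRoot at h
  dsimp only at h
  split_ifs at h
  all_goals first
    | (have := betaB_inj (by omega) (by omega) (by omega) (by omega) (by omega) (by omega) h; omega)
    | (have := gammaB_inj (by omega) (by omega) (by omega) (by omega) (by omega) (by omega) h; omega)
    | exact absurd h (betaB_ne_gammaB (by omega) (by omega) (by omega))
    | exact absurd h.symm (betaB_ne_gammaB (by omega) (by omega) (by omega))

lemma posRootsB_eq_image : posRootsB r = (segments r).image (segmentRoot r) := by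
  ext v
  simp only [posRootsB, mem_union, mem_image, mem_filter, mem_product, mem_Icc, Prod.exists]
  constructor
  · rintro (⟨a, b, ⟨⟨⟨ha, -⟩, -, hb⟩, hab⟩, rfl⟩ | ⟨a, b, ⟨⟨⟨ha, -⟩, -, hb⟩, hab⟩, rfl⟩)
    · rcases hb.lt_or_eq with hb | rfl
      · refine ⟨⟨a - 1, by omega⟩, b + 1, mem_segments.mpr (by simp only; omega), ?_⟩
        rw [segmentRoot_of_le (by omega), Fin.val_mk]
        congr 1; omega
      · refine ⟨⟨a - 1, by omega⟩, 2 * b + 1 - (a - 1), mem_segments.mpr (by simp only; omega), ?_⟩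
        rw [segmentRoot_bar, Fin.val_mk]
        congr 1; omega
    · refine ⟨⟨a - 1, by omega⟩, 2 * r + 2 - b, mem_segments.mpr (by simp only; omega), ?_⟩
      rw [segmentRoot_of_lt (by omega) (by simp only; omega), Fin.val_mk]
      congr 1 <;> omega
  · rintro ⟨i, x, hp, rfl⟩
    have hi := i.2
    rw [mem_segments] at hp
    dsimp only at hp
    by_cases hx : x ≤ r
    · exact Or.inl ⟨i + 1, x - 1, ⟨⟨⟨by omega, by omega⟩, by omega, by omega⟩, by omega⟩,
        (segmentRoot_of_le hx).symm⟩
    by_cases hx' : x = 2 * r + 1 - i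
    · subst hx'
      exact Or.inl ⟨i + 1, r, ⟨⟨⟨by omega, by omega⟩, by omega, le_rfl⟩, by omega⟩,
        (segmentRoot_bar i).symm⟩
    · exact Or.inr ⟨i + 1, 2 * r + 2 - x, ⟨⟨⟨by omega, by omega⟩, by omega, by omega⟩, by omega⟩,
        (segmentRoot_of_lt (by omega) hx').symm⟩

end Roots

section Tableaux

variable {r : ℕ}

lemma TabB.ext_row {T T' : TabB r} (h : T.row = T'.row) : T = T' := by
  cases T
  cases T'
  simpa using h

lemma TabB.pairwise_row (T : TabB r) (i : Fin r) : (T.row i).Pairwise (· ≤ ·) :=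
  List.isChain_iff_pairwise.mp (T.row_weak i)

lemma TabB.le_of_mem_row (T : TabB r) {i : Fin r} {e : ℕ} (he : e ∈ T.row i) : i.1 + 1 ≤ e := by
  obtain ⟨l, hl⟩ := List.head?_eq_some_iff.mp (T.first_col i)
  have hsorted := T.pairwise_row i
  rw [hl, List.pairwise_cons] at hsorted
  rw [hl, List.mem_cons] at he
  rcases he with rfl | he
  exacts [le_rfl, hsorted.1 e he]

lemma ellB_eq_zero (T : TabB r) {i : Fin r} {x : ℕ} (hx : x < i.1 + 1 ∨ 2 * r + 1 - i.1 < x) :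
    ellB r T i x = 0 :=
  List.count_eq_zero.mpr fun hx' => by
    have := T.le_of_mem_row hx'
    have := T.row_bound i x hx'
    omega

def xiSeg (T : TabB r) (p : Fin r × ℕ) : ℕ :=
  if p.2 = 2 * r + 1 - p.1 then 2 * ellB r T p.1 p.2 + ellB r T p.1 (r + 1) else ellB r T p.1 p.2

lemma xiSeg_of_ne (T : TabB r) {i : Fin r} {x : ℕ} (hx : x ≠ 2 * r + 1 - i) :
    xiSeg T (i, x) = ellB r T i x :=
  if_neg hx

lemma xiSeg_bar (T : TabB r) (i : Fin r) :
    xiSeg T (i, 2 * r + 1 - i) = 2 * ellB r T i (2 * r + 1 - i) + ellB r T i (r + 1) :=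
  if_pos rfl

lemma XiB_eq_sum (T : TabB r) (v : Fin r → ℕ) :
    XiB r T v = ∑ p ∈ segments r, if v = segmentRoot r p then xiSeg T p else 0 := by
  rw [XiB, sum_segments]
  refine sum_congr rfl fun i _ => ?_
  have hi := i.2
  rw [sum_segCodes hi]
  congr 1
  · congr 1
    · refine sum_congr rfl fun x hx => ?_
      rw [mem_Icc] at hx
      rw [segmentRoot_of_le hx.2, xiSeg_of_ne T (by omega)]
    · rw [segmentRoot_bar, xiSeg_bar]
  · refine sum_congr rfl fun k hk => ?_
    rw [mem_Icc] at hk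
    rw [segmentRoot_of_lt (by omega) (by omega), xiSeg_of_ne T (by omega),
      show 2 * r + 2 - (2 * r + 2 - k) = k by omega]

lemma XiB_segmentRoot (T : TabB r) {p : Fin r × ℕ} (hp : p ∈ segments r) :
    XiB r T (segmentRoot r p) = xiSeg T p := by
  rw [XiB_eq_sum, sum_eq_single_of_mem p hp fun q hq hqp => if_neg fun h =>
    hqp (segmentRoot_injOn hq hp h.symm), if_pos rfl]

lemma negwtB_eq_sum (T : TabB r) :
    negwtB r T = ∑ q : segments r, xiSeg T q • segmentRoot r q := by
  rw [negwtB, posRootsB_eq_image, sum_image segmentRoot_injOn, ← sum_coe_sort]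
  exact sum_congr rfl fun q _ => by rw [XiB_segmentRoot T q.2]

lemma card_filter_ellB_ne_zero (T : TabB r) (i : Fin r) :
    #{x ∈ Icc (i.1 + 2) (2 * r + 1) | ellB r T i x ≠ 0} =
      #{x ∈ segCodes r i | xiSeg T (i, x) ≠ 0} +
        if ellB r T i (r + 1) ≠ 0 ∧ ellB r T i (2 * r + 1 - i) ≠ 0 then 1 else 0 := by
  have hi := i.2
  have hbar : 2 * r + 1 - i.1 ∈ segCodes r i := mem_segCodes.mpr (by omega)
  have hzero : r + 1 ∉ segCodes r i := by simp [mem_segCodes]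
  have hsub : insert (r + 1) (segCodes r i) ⊆ Icc (i.1 + 2) (2 * r + 1) := by
    intro x
    simp only [mem_insert, mem_segCodes, mem_Icc]
    omega
  have hrest : ∑ x ∈ (segCodes r i).erase (2 * r + 1 - i), (if xiSeg T (i, x) ≠ 0 then 1 else 0) =
      ∑ x ∈ (segCodes r i).erase (2 * r + 1 - i), if ellB r T i x ≠ 0 then 1 else 0 :=
    sum_congr rfl fun x hx => by rw [xiSeg_of_ne T (ne_of_mem_erase hx)]
  rw [card_filter, card_filter, ← sum_subset hsub fun x hx hx' => by
      rw [ellB_eq_zero T (by simp only [mem_insert, mem_segCodes, mem_Icc] at hx hx'; omega),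
        if_neg (not_not.mpr rfl)],
    sum_insert hzero, ← add_sum_erase _ _ hbar, ← add_sum_erase _ _ hbar, hrest, xiSeg_bar]
  split_ifs <;> omega

lemma segB_eq_card (T : TabB r) : segB r T = #{q : segments r | xiSeg T q ≠ 0} := by
  have hcard : #{q : segments r | xiSeg T q ≠ 0} =
      ∑ i : Fin r, #{x ∈ segCodes r i | xiSeg T (i, x) ≠ 0} := by
    rw [card_filter, sum_coe_sort (segments r) fun p => if xiSeg T p ≠ 0 then 1 else 0,
      sum_segments]
    simp only [card_filter]
  rw [segB, segB', eB, card_filter, hcard]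
  simp only [card_filter_ellB_ne_zero, sum_add_distrib]
  omega

end Tableaux

section Construction

variable {r : ℕ} (c : Fin r × ℕ → ℕ)

/-- A multiplicity `m` of `β_{i+1,r}` is realised by `⌊m/2⌋` entries `ī` and `m mod 2` entries
`0`, inverting `m = 2ℓ_{i,ī} + ℓ_{i,0}`. -/
def rowCount (i : Fin r) (x : ℕ) : ℕ :=
  if x = r + 1 then c (i, 2 * r + 1 - i) % 2
  else if x = 2 * r + 1 - i then c (i, x) / 2 else c (i, x)

def rowTail (i : Fin r) : Multiset ℕ :=
  ∑ x ∈ Ico (i.1 + 2) (2 * r + 2 - i), Multiset.replicate (rowCount c i x) x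

/-- Marginal largeness forces `|row n| = |row (n+1)| + 1 + |rowTail n|`, whence this closed form. -/
def rowLength (n : ℕ) : ℕ :=
  ∑ j : Fin r with n ≤ j.1, (Multiset.card (rowTail c j) + 1)

def tabRow (i : Fin r) : List ℕ :=
  List.replicate (rowLength c (i.1 + 1) + 1) (i.1 + 1) ++ (rowTail c i).sort

lemma count_rowTail (i : Fin r) (x : ℕ) :
    (rowTail c i).count x = if x ∈ Ico (i.1 + 2) (2 * r + 2 - i) then rowCount c i x else 0 := by
  simp only [rowTail, Multiset.count_sum', Multiset.count_replicate, sum_ite_eq']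

lemma mem_rowTail {i : Fin r} {x : ℕ} (hx : x ∈ rowTail c i) :
    x ∈ Ico (i.1 + 2) (2 * r + 2 - i) := by
  by_contra h
  rw [← Multiset.count_pos, count_rowTail, if_neg h] at hx
  exact hx.false

lemma card_rowTail (i : Fin r) :
    Multiset.card (rowTail c i) = ∑ x ∈ Ico (i.1 + 2) (2 * r + 2 - i), rowCount c i x := by
  simp only [rowTail, Multiset.card_sum, Multiset.card_replicate]

lemma rowLength_eq_zero {n : ℕ} (hn : r ≤ n) : rowLength c n = 0 := by
  rw [rowLength, filter_false_of_mem fun j _ => by omega, sum_empty]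

lemma rowLength_succ (i : Fin r) :
    rowLength c i = rowLength c (i.1 + 1) + (Multiset.card (rowTail c i) + 1) := by
  have hsplit : univ.filter (fun j : Fin r => i.1 ≤ j.1) =
      insert i (univ.filter fun j : Fin r => i.1 + 1 ≤ j.1) := by
    ext j
    simp only [mem_filter, mem_univ, true_and, mem_insert, Fin.ext_iff]
    omega
  rw [rowLength, rowLength, hsplit, sum_insert (by simp), add_comm]

lemma length_tabRow (i : Fin r) : (tabRow c i).length = rowLength c i := by
  rw [tabRow, List.length_append, List.length_replicate, Multiset.length_sort, rowLength_succ]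
  ring

lemma count_tabRow (i : Fin r) (x : ℕ) :
    (tabRow c i).count x =
      if x = i.1 + 1 then rowLength c (i.1 + 1) + 1 else (rowTail c i).count x := by
  rw [tabRow, List.count_append, List.count_replicate, ← Multiset.coe_count, Multiset.sort_eq,
    count_rowTail]
  by_cases hx : x = i.1 + 1
  · subst hx
    simp
  · simp [hx, Ne.symm hx]

lemma mem_tabRow {i : Fin r} {e : ℕ} (he : e ∈ tabRow c i) : i.1 + 1 ≤ e ∧ e ≤ 2 * r + 1 - i := by
  rw [tabRow, List.mem_append, List.mem_replicate, Multiset.mem_sort] at he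
  rcases he with ⟨-, rfl⟩ | he
  · have := i.2
    omega
  · have := mem_Ico.mp (mem_rowTail c he)
    omega

lemma pairwise_tabRow (i : Fin r) : (tabRow c i).Pairwise (· ≤ ·) := by
  refine List.pairwise_append.mpr ⟨List.pairwise_replicate.mpr (Or.inr le_rfl),
    Multiset.pairwise_sort _ _, fun a ha b hb => ?_⟩
  rw [List.mem_replicate] at ha
  rw [Multiset.mem_sort] at hb
  have := mem_Ico.mp (mem_rowTail c hb)
  omega

def tabOfXi : TabB r where
  row := tabRow c
  entry_mem i e he := by
    have := mem_tabRow c he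
    omega
  row_weak i := List.isChain_iff_pairwise.mpr (pairwise_tabRow c i)
  first_col i := by simp [tabRow, List.replicate_succ]
  row_bound i e he := (mem_tabRow c he).2
  zero_once i := by
    have := i.2
    rw [count_tabRow, if_neg (by omega), count_rowTail, if_pos (by simp only [mem_Ico]; omega),
      rowCount, if_pos rfl]
    omega
  col_le i h := by
    rw [length_tabRow, length_tabRow, rowLength_succ c i]
    exact Nat.le_add_right _ _
  col_strict i h j hj := by
    have hj' : j < rowLength c (i.1 + 1) := by rwa [length_tabRow] at hj
    have hlow : (tabRow c i).getD j 0 = i + 1 := by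
      rw [tabRow, List.getD_append _ _ _ _ (by simp; omega), List.getD_replicate _ (by omega)]
    rw [hlow, List.getD_eq_getElem _ _ hj]
    exact (mem_tabRow c (List.getElem_mem hj)).1
  marg_large i := by
    rw [count_tabRow, if_pos rfl]
    split_ifs with h
    · rw [length_tabRow]
    · rw [rowLength_eq_zero c (by omega)]

lemma xiSeg_tabOfXi {p : Fin r × ℕ} (hp : p ∈ segments r) : xiSeg (tabOfXi c) p = c p := by
  obtain ⟨i, x⟩ := p
  rw [mem_segments] at hp
  dsimp only at hp
  have hell {y : ℕ} (hy : y ∈ Ico (i.1 + 2) (2 * r + 2 - i)) :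
      ellB r (tabOfXi c) i y = rowCount c i y := by
    rw [ellB, tabOfXi, count_tabRow, if_neg (by simp only [mem_Ico] at hy; omega), count_rowTail,
      if_pos hy]
  by_cases hx : x = 2 * r + 1 - i
  · subst hx
    rw [xiSeg_bar, hell (by simp only [mem_Ico]; omega), hell (by simp only [mem_Ico]; omega),
      rowCount, rowCount, if_neg (by omega), if_pos rfl, if_pos rfl]
    exact Nat.div_add_mod _ _
  · rw [xiSeg_of_ne _ hx, hell (by simp only [mem_Ico]; omega), rowCount, if_neg hp.2.2, if_neg hx]

end Construction

section Uniqueness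

variable {r : ℕ} (T : TabB r) {c : Fin r × ℕ → ℕ} (hc : ∀ p ∈ segments r, c p = xiSeg T p)
include hc

lemma rowCount_eq_ellB {i : Fin r} {x : ℕ} (hx : x ∈ Ico (i.1 + 2) (2 * r + 2 - i)) :
    rowCount c i x = ellB r T i x := by
  have := i.2
  have hzero : ellB r T i (r + 1) ≤ 1 := T.zero_once i
  rw [mem_Ico] at hx
  have hbar := hc (i, 2 * r + 1 - i) (mem_segments.mpr (by dsimp only; omega))
  rw [xiSeg_bar] at hbar
  rw [rowCount]
  split_ifs with h₁ h₂
  · rw [hbar, h₁]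
    omega
  · rw [h₂, hbar]
    omega
  · rw [hc (i, x) (mem_segments.mpr (by dsimp only; omega)), xiSeg_of_ne T h₂]

lemma count_rowTail_eq_ellB {i : Fin r} {x : ℕ} (hx : x ≠ i.1 + 1) :
    (rowTail c i).count x = ellB r T i x := by
  rw [count_rowTail]
  split_ifs with h
  · exact rowCount_eq_ellB T hc h
  · rw [mem_Ico] at h
    rw [ellB_eq_zero T (by omega)]

lemma length_row_eq_rowLength (i : Fin r) : (T.row i).length = rowLength c i := by
  have hi := i.2
  have hlen : (T.row i).length = ellB r T i (i + 1) + Multiset.card (rowTail c i) := by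
    have hsupp : ∀ e ∈ (T.row i : Multiset ℕ), e ∈ Ico (i.1 + 1) (2 * r + 2 - i) := fun e he => by
      have := T.le_of_mem_row (Multiset.mem_coe.mp he)
      have := T.row_bound i e (Multiset.mem_coe.mp he)
      rw [mem_Ico]
      omega
    rw [← Multiset.coe_card, ← Multiset.sum_count_eq_card hsupp, sum_eq_sum_Ico_succ_bot (by omega),
      card_rowTail]
    exact congrArg₂ _ (Multiset.coe_count _ _) (sum_congr rfl fun x hx =>
      (Multiset.coe_count _ _).trans (rowCount_eq_ellB T hc hx).symm)
  rw [hlen, ellB, T.marg_large, rowLength_succ c i]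
  split_ifs with h
  · rw [length_row_eq_rowLength ⟨i + 1, h⟩]
    ring
  · rw [rowLength_eq_zero c (by omega)]
    ring
termination_by r - i.1

lemma row_eq_tabRow (i : Fin r) : T.row i = tabRow c i := by
  refine List.Perm.eq_of_pairwise' (T.pairwise_row i) (pairwise_tabRow c i)
    (List.perm_iff_count.mpr fun x => ?_)
  rw [count_tabRow]
  split_ifs with hx
  · rw [hx, T.marg_large]
    split_ifs with h
    · rw [length_row_eq_rowLength T hc ⟨i + 1, h⟩]
    · rw [rowLength_eq_zero c (by omega)]
  · exact (count_rowTail_eq_ellB T hc hx).symm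

lemma tabOfXi_eq : tabOfXi c = T :=
  TabB.ext_row (funext fun i => (row_eq_tabRow T hc i).symm)

end Uniqueness

noncomputable def tabEquiv (r : ℕ) : TabB r ≃ (segments r → ℕ) where
  toFun T q := xiSeg T q
  invFun c := tabOfXi (Function.extend Subtype.val c 0)
  left_inv T := tabOfXi_eq T fun p hp =>
    Subtype.val_injective.extend_apply (fun q : segments r => xiSeg T q) 0 ⟨p, hp⟩
  right_inv c := funext fun q => by
    change xiSeg (tabOfXi _) q.1 = c q
    rw [xiSeg_tabOfXi _ q.2, Subtype.val_injective.extend_apply]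

theorem stmt4_general (r : ℕ) :
    ∀ e : Option (Fin r) →₀ ℕ,
      MvPowerSeries.coeff (R := ℤ) e
        (∏ v ∈ posRootsB r, (1 - tvar r * zmon r v) *
          MvPowerSeries.invOfUnit (1 - zmon r v) 1)
      = ∑' T : TabB r,
          MvPowerSeries.coeff (R := ℤ) e
            ((1 - tvar r) ^ segB r T * zmon r (negwtB r T)) := by
  intro e
  rw [posRootsB_eq_image, prod_image segmentRoot_injOn, ← prod_coe_sort,
    coeff_prod_one_sub_mul_invOfUnit _ _ fun q => constantCoeff_zmon (segmentRoot_ne_zero q.2),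
    ← (tabEquiv r).tsum_eq]
  refine tsum_congr fun T => ?_
  rw [segB_eq_card, negwtB_eq_sum, zmon_sum_nsmul]
  rfl

/-- the Gindikin–Karpelevich formula as a sum over the marginally
large tableaux `𝒯(∞)` of type `B_r`, stated coefficientwise in
`ℤ[[t, z_1, …, z_r]]`. -/
theorem stmt4 (r : ℕ) (hr : 2 ≤ r) :
    ∀ e : Option (Fin r) →₀ ℕ,
      MvPowerSeries.coeff (R := ℤ) e
        (∏ v ∈ posRootsB r, (1 - tvar r * zmon r v) *
          MvPowerSeries.invOfUnit (1 - zmon r v) 1)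
      = ∑' T : TabB r,
          MvPowerSeries.coeff (R := ℤ) e
            ((1 - tvar r) ^ segB r T * zmon r (negwtB r T)) :=
  stmt4_general r
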